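/- Let p, q > 0 with p + q = 1, and let ρ1, ρ2 be n×n density matrices, with a_1 ≥ … ≥ a_n ≥ 0 the eigenvalues of ρ1. Then the maximum of tr(ρ1^p Φ(ρ2)^q) over all quantum channels Φ equals 1, and the minimum equals a_n^p; the same holds with tr|ρ1^p Φ(ρ2)^q| in place of tr(ρ1^p Φ(ρ2)^q). -/

import Mathlib

open Matrix
open scoped ComplexOrder Classical

/-- The vector of a tuple's entries sorted in decreasing (nonincreasing) order. -/
noncomputable def sortDec {n : ℕ} (x : Fin n → ℝ) : Fin n → ℝ :=
  fun i => x (Tuple.sort x i.rev)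

/-- The eigenvalues of a Hermitian matrix arranged in decreasing order,
`λ(A)`; junk value `0` if `A` is not Hermitian. -/
noncomputable def eigsDec {n : ℕ} (A : Matrix (Fin n) (Fin n) ℂ) : Fin n → ℝ :=
  if hA : A.IsHermitian then sortDec hA.eigenvalues else 0

/-- The eigenvalues of a Hermitian matrix arranged in increasing order. -/
noncomputable def eigsInc {n : ℕ} (A : Matrix (Fin n) (Fin n) ℂ) : Fin n → ℝ :=
  fun i => eigsDec A i.rev

/-- `Λ↓(A)`: the diagonal matrix of the eigenvalues of `A` in decreasing order. -/
noncomputable def LambdaDown {n : ℕ} (A : Matrix (Fin n) (Fin n) ℂ) :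
    Matrix (Fin n) (Fin n) ℂ :=
  Matrix.diagonal fun i => (eigsDec A i : ℂ)

/-- `Λ↑(A)`: the diagonal matrix of the eigenvalues of `A` in increasing order. -/
noncomputable def LambdaUp {n : ℕ} (A : Matrix (Fin n) (Fin n) ℂ) :
    Matrix (Fin n) (Fin n) ℂ :=
  Matrix.diagonal fun i => (eigsInc A i : ℂ)

/-- `x ≺ y`: the sum of the `k` largest entries of `x` is at most that of `y`
for every `k`, with equality of the total sums. -/
def Majorizes {n : ℕ} (x y : Fin n → ℝ) : Prop :=
  (∀ k : ℕ, ∑ i ∈ Finset.univ.filter (fun i : Fin n => (i : ℕ) < k), sortDec x i ≤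
      ∑ i ∈ Finset.univ.filter (fun i : Fin n => (i : ℕ) < k), sortDec y i) ∧
    (∑ i, x i) = ∑ i, y i

/-- A function `d` is Schur-convex if `x ≺ y` implies `d x ≤ d y`. -/
def SchurConvex {n : ℕ} (d : (Fin n → ℝ) → ℝ) : Prop :=
  ∀ x y : Fin n → ℝ, Majorizes x y → d x ≤ d y

/-- A density matrix: positive semidefinite with trace one. -/
def IsDensityMatrix {n : ℕ} (ρ : Matrix (Fin n) (Fin n) ℂ) : Prop :=
  ρ.PosSemidef ∧ ρ.trace = 1

/-- A quantum channel: completely positive trace preserving map in Kraus form. -/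
def IsQuantumChannel {n : ℕ}
    (Φ : Matrix (Fin n) (Fin n) ℂ → Matrix (Fin n) (Fin n) ℂ) : Prop :=
  ∃ (r : ℕ) (F : Fin r → Matrix (Fin n) (Fin n) ℂ),
    (∑ j, (F j)ᴴ * F j) = 1 ∧ ∀ X, Φ X = ∑ j, F j * X * (F j)ᴴ

/-- A unital quantum channel. -/
def IsUnitalChannel {n : ℕ}
    (Φ : Matrix (Fin n) (Fin n) ℂ → Matrix (Fin n) (Fin n) ℂ) : Prop :=
  IsQuantumChannel Φ ∧ Φ 1 = 1

/-- A mixed unitary channel: a convex combination of unitary conjugations. -/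
def IsMixedUnitaryChannel {n : ℕ}
    (Φ : Matrix (Fin n) (Fin n) ℂ → Matrix (Fin n) (Fin n) ℂ) : Prop :=
  ∃ (r : ℕ) (t : Fin r → ℝ) (U : Fin r → Matrix (Fin n) (Fin n) ℂ),
    (∀ j, 0 ≤ t j) ∧ (∑ j, t j) = 1 ∧
      (∀ j, U j ∈ Matrix.unitaryGroup (Fin n) ℂ) ∧
      ∀ X, Φ X = ∑ j, (t j : ℂ) • (U j * X * (U j)ᴴ)

/-- Functional calculus: `f(A)` for a Hermitian matrix `A`, via the spectral theorem;
junk value `0` if `A` is not Hermitian. -/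
noncomputable def matFun {n : ℕ} (f : ℝ → ℝ) (A : Matrix (Fin n) (Fin n) ℂ) :
    Matrix (Fin n) (Fin n) ℂ :=
  if hA : A.IsHermitian then
    (hA.eigenvectorUnitary : Matrix (Fin n) (Fin n) ℂ) *
      Matrix.diagonal (fun i => (f (hA.eigenvalues i) : ℂ)) *
      (hA.eigenvectorUnitary : Matrix (Fin n) (Fin n) ℂ)ᴴ
  else 0

/-- The positive semidefinite square root (as defined in Mathlib, Dec 2024). -/
noncomputable def Matrix.PosSemidef.sqrt {n : ℕ} {A : Matrix (Fin n) (Fin n) ℂ}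
    (hA : A.PosSemidef) : Matrix (Fin n) (Fin n) ℂ :=
  (hA.1.eigenvectorUnitary : Matrix (Fin n) (Fin n) ℂ) *
    Matrix.diagonal (fun i => ((Real.sqrt (hA.1.eigenvalues i) : ℝ) : ℂ)) *
    (star hA.1.eigenvectorUnitary : Matrix (Fin n) (Fin n) ℂ)

/-- `|A| = (AᴴA)^{1/2}`. -/
noncomputable def matAbs {n : ℕ} (A : Matrix (Fin n) (Fin n) ℂ) :
    Matrix (Fin n) (Fin n) ℂ :=
  (Matrix.posSemidef_conjTranspose_mul_self A).sqrt

/-- `tr|A|`, the sum of the singular values of `A`. -/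
noncomputable def traceAbs {n : ℕ} (A : Matrix (Fin n) (Fin n) ℂ) : ℝ :=
  ((matAbs A).trace).re

/-- The singular values of `A` in decreasing order. -/
noncomputable def singVals {n : ℕ} (A : Matrix (Fin n) (Fin n) ℂ) : Fin n → ℝ :=
  eigsDec (matAbs A)

/-- The positive semidefinite square root of a PSD matrix (junk value `0` otherwise). -/
noncomputable def matSqrt {n : ℕ} (A : Matrix (Fin n) (Fin n) ℂ) :
    Matrix (Fin n) (Fin n) ℂ :=
  if hA : A.PosSemidef then hA.sqrt else 0

/-- The fidelity `F(ρ,σ) = tr|ρ^{1/2} σ^{1/2}|`. -/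
noncomputable def fidelity {n : ℕ} (ρ σ : Matrix (Fin n) (Fin n) ℂ) : ℝ :=
  traceAbs (matSqrt ρ * matSqrt σ)

/-- The relative entropy `S(ρ‖σ) = tr(ρ (log ρ - log σ))`. -/
noncomputable def relEntropy {n : ℕ} (ρ σ : Matrix (Fin n) (Fin n) ℂ) : ℝ :=
  ((ρ * (matFun Real.log ρ - matFun Real.log σ)).trace).re

/-- The (real) trace of a matrix whose trace is real. -/
noncomputable def trR {n : ℕ} (A : Matrix (Fin n) (Fin n) ℂ) : ℝ := A.trace.re

/-! For density matrices `ρ = U diag(a) Uᴴ` and `σ = W diag(b) Wᴴ` and any matrix `V`,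
`tr (V ρ^p Vᴴ σ^q) = ∑ᵢⱼ aᵢ^p bⱼ^q |((V U)ᴴ W)ᵢⱼ|²`. When `V` is a contraction the weights
`|((V U)ᴴ W)ᵢⱼ|²` form a doubly substochastic matrix, so Young's inequality
`a^p b^q ≤ p a + q b` bounds the sum by `p + q = 1`. For `V = 1` they are doubly stochastic, and
`aᵢ^p ≥ aₙ^p`, `bⱼ^q ≥ bⱼ` give the lower bound `aₙ^p`.

The trace norm reduces to this: the polar decomposition gives a contraction `V` with
`V (ρ^p σ^q) = |ρ^p σ^q|`, and `tr (V ρ^p σ^q)` is the Hilbert–Schmidt inner product of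
`ρ^{p/2} Vᴴ σ^{q/2}` and `ρ^{p/2} σ^{q/2}`, whose squared norms are `tr (V ρ^p Vᴴ σ^q) ≤ 1` and
`tr (ρ^p σ^q) ≤ 1`. The lower bound transfers through `Re tr M ≤ tr |M|`.
Both extremes are attained by replacement channels `X ↦ tr X • τ`, with `τ = ρ₁` and with `τ` the
projection onto an eigenvector of `aₙ`. -/

section Scalar

variable {ι κ : Type*} [Fintype ι] [Fintype κ]

theorem sum_sum_rpow_mul_rpow_mul_le {p q : ℝ} (hp : 0 ≤ p) (hq : 0 ≤ q) (hpq : p + q = 1)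
    {a : ι → ℝ} {b : κ → ℝ} {c : ι → κ → ℝ} (ha : ∀ i, 0 ≤ a i) (hb : ∀ j, 0 ≤ b j)
    (hc : ∀ i j, 0 ≤ c i j) (hrow : ∀ i, ∑ j, c i j ≤ 1) (hcol : ∀ j, ∑ i, c i j ≤ 1) :
    ∑ i, ∑ j, a i ^ p * b j ^ q * c i j ≤ p * ∑ i, a i + q * ∑ j, b j := by
  have young : ∀ i j, a i ^ p * b j ^ q * c i j ≤ p * (a i * c i j) + q * (b j * c i j) :=
    fun i j => by
      nlinarith [Real.geom_mean_le_arith_mean2_weighted hp hq (ha i) (hb j) hpq, hc i j]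
  calc ∑ i, ∑ j, a i ^ p * b j ^ q * c i j
      ≤ ∑ i, ∑ j, (p * (a i * c i j) + q * (b j * c i j)) :=
        Finset.sum_le_sum fun i _ => Finset.sum_le_sum fun j _ => young i j
    _ = p * ∑ i, a i * ∑ j, c i j + q * ∑ j, b j * ∑ i, c i j := by
        simp only [Finset.sum_add_distrib, ← Finset.mul_sum]
        rw [Finset.sum_comm (f := fun i j => b j * c i j)]
        simp only [← Finset.mul_sum]
    _ ≤ p * ∑ i, a i * 1 + q * ∑ j, b j * 1 := by
        gcongr with i _ j _
        · exact ha i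
        · exact hrow i
        · exact hb j
        · exact hcol j
    _ = p * ∑ i, a i + q * ∑ j, b j := by simp only [mul_one]

theorem mul_sum_le_sum_sum_rpow_mul_rpow_mul {p q m : ℝ} (hp : 0 ≤ p) (hq : q ≤ 1)
    {a : ι → ℝ} {b : κ → ℝ} {c : ι → κ → ℝ} (hm : 0 ≤ m) (hma : ∀ i, m ≤ a i)
    (hb : ∀ j, 0 ≤ b j) (hb1 : ∀ j, b j ≤ 1) (hc : ∀ i j, 0 ≤ c i j)
    (hcol : ∀ j, 1 ≤ ∑ i, c i j) :
    m ^ p * ∑ j, b j ≤ ∑ i, ∑ j, a i ^ p * b j ^ q * c i j := by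
  have term : ∀ i j, m ^ p * b j * c i j ≤ a i ^ p * b j ^ q * c i j := fun i j => by
    have hbq : b j ≤ b j ^ q := by
      rcases (hb j).eq_or_lt with h | h
      · rw [← h]; exact Real.rpow_nonneg le_rfl q
      · simpa using Real.rpow_le_rpow_of_exponent_ge h (hb1 j) hq
    exact mul_le_mul_of_nonneg_right (mul_le_mul (Real.rpow_le_rpow hm (hma i) hp) hbq (hb j)
      (Real.rpow_nonneg (hm.trans (hma i)) p)) (hc i j)
  calc m ^ p * ∑ j, b j ≤ ∑ j, m ^ p * b j * ∑ i, c i j := by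
        rw [Finset.mul_sum]
        exact Finset.sum_le_sum fun j _ =>
          le_mul_of_one_le_right (mul_nonneg (Real.rpow_nonneg hm p) (hb j)) (hcol j)
    _ = ∑ i, ∑ j, m ^ p * b j * c i j := by
        simp only [Finset.mul_sum]; exact Finset.sum_comm
    _ ≤ ∑ i, ∑ j, a i ^ p * b j ^ q * c i j :=
        Finset.sum_le_sum fun i _ => Finset.sum_le_sum fun j _ => term i j

end Scalar

namespace Matrix

lemma re_mul_conjTranspose_apply_self {m n : Type*} [Fintype n] (G : Matrix m n ℂ) (i : m) :
    ((G * Gᴴ) i i).re = ∑ j, ‖G i j‖ ^ 2 := by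
  simp [mul_apply, Complex.re_sum, Complex.mul_conj', ← Complex.ofReal_pow]

lemma re_conjTranspose_mul_apply_self {m n : Type*} [Fintype m] (G : Matrix m n ℂ) (j : n) :
    ((Gᴴ * G) j j).re = ∑ i, ‖G i j‖ ^ 2 := by
  simpa using re_mul_conjTranspose_apply_self Gᴴ j

lemma sum_row_norm_sq_le_one {m n : Type*} [Fintype n] [DecidableEq m] {G : Matrix m n ℂ}
    (h : (1 - G * Gᴴ).PosSemidef) (i : m) : ∑ j, ‖G i j‖ ^ 2 ≤ 1 := by
  have := (Complex.le_def.mp (h.diag_nonneg (i := i))).1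
  simp only [sub_apply, one_apply_eq, Complex.zero_re, Complex.sub_re, Complex.one_re,
    re_mul_conjTranspose_apply_self] at this
  linarith

lemma sum_col_norm_sq_le_one {m n : Type*} [Fintype m] [DecidableEq n] {G : Matrix m n ℂ}
    (h : (1 - Gᴴ * G).PosSemidef) (j : n) : ∑ i, ‖G i j‖ ^ 2 ≤ 1 := by
  simpa using sum_row_norm_sq_le_one (G := Gᴴ) (by simpa using h) j

lemma re_trace_conjTranspose_mul_self {m n : Type*} [Fintype m] [Fintype n]
    (A : Matrix m n ℂ) : (Aᴴ * A).trace.re = ∑ i, ∑ j, ‖A i j‖ ^ 2 := by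
  rw [trace_mul_comm, trace, Complex.re_sum]
  simp only [diag_apply, re_mul_conjTranspose_apply_self]

lemma norm_trace_conjTranspose_mul_sq_le {m n : Type*} [Fintype m] [Fintype n]
    (A B : Matrix m n ℂ) :
    ‖(Aᴴ * B).trace‖ ^ 2 ≤ (Aᴴ * A).trace.re * (Bᴴ * B).trace.re := by
  have htr : (Aᴴ * B).trace = ∑ x : m × n, star (A x.1 x.2) * B x.1 x.2 := by
    rw [trace_mul_comm, Fintype.sum_prod_type]
    simp [trace, mul_apply, mul_comm]
  rw [re_trace_conjTranspose_mul_self, re_trace_conjTranspose_mul_self,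
    ← Fintype.sum_prod_type', ← Fintype.sum_prod_type', htr]
  calc ‖∑ x : m × n, star (A x.1 x.2) * B x.1 x.2‖ ^ 2
      ≤ (∑ x : m × n, ‖A x.1 x.2‖ * ‖B x.1 x.2‖) ^ 2 := by
        gcongr
        refine (norm_sum_le _ _).trans_eq ?_
        simp
    _ ≤ _ := Finset.sum_mul_sq_le_sq_mul_sq _ _ _

lemma trace_conj_diagonal_mul_conj_diagonal {n : Type*} [Fintype n] [DecidableEq n]
    (P Q : Matrix n n ℂ) (α β : n → ℝ) :
    (P * diagonal (fun i => (α i : ℂ)) * Pᴴ * (Q * diagonal (fun j => (β j : ℂ)) * Qᴴ)).trace =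
      ((∑ i, ∑ j, α i * β j * ‖(Pᴴ * Q) i j‖ ^ 2 : ℝ) : ℂ) := by
  have cycle : (P * diagonal (fun i => (α i : ℂ)) * Pᴴ *
      (Q * diagonal (fun j => (β j : ℂ)) * Qᴴ)).trace = (diagonal (fun i => (α i : ℂ)) *
        ((Pᴴ * Q) * diagonal (fun j => (β j : ℂ)) * (Pᴴ * Q)ᴴ)).trace := by
    simp only [conjTranspose_mul, conjTranspose_conjTranspose, Matrix.mul_assoc]
    rw [trace_mul_comm]
    simp only [Matrix.mul_assoc]
  rw [cycle]
  generalize Pᴴ * Q = G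
  rw [trace]
  push_cast
  refine Finset.sum_congr rfl fun i _ => ?_
  simp only [diag_apply, diagonal_mul]
  simp only [mul_apply, conjTranspose_apply, Finset.mul_sum]
  refine Finset.sum_congr rfl fun j _ => ?_
  simp only [← mul_apply, mul_diagonal, Complex.star_def, ← Complex.mul_conj' (G i j)]
  ring

lemma IsHermitian.posSemidef_of_isIdempotentElem {n : Type*} [Fintype n] {F : Matrix n n ℂ}
    (hF : F.IsHermitian) (h : IsIdempotentElem F) : F.PosSemidef := by
  have := posSemidef_conjTranspose_mul_self F
  rwa [hF.eq, h.eq] at this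

lemma IsHermitian.posSemidef_one_sub_of_isIdempotentElem {n : Type*} [Fintype n] [DecidableEq n]
    {F : Matrix n n ℂ} (hF : F.IsHermitian) (h : IsIdempotentElem F) : (1 - F).PosSemidef :=
  (isHermitian_one.sub hF).posSemidef_of_isIdempotentElem h.one_sub

lemma mul_conjTranspose_mul_self_of_isIdempotentElem {m n : Type*} [Fintype m] [Fintype n]
    {V : Matrix m n ℂ} (h : IsIdempotentElem (V * Vᴴ)) : V * Vᴴ * V = V := by
  -- with `E = V Vᴴ`, `(E V - V) (E V - V)ᴴ = E³ - 2 E² + E = 0`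
  rw [← sub_eq_zero, ← conjTranspose_eq_zero, ← conjTranspose_mul_self_eq_zero,
    conjTranspose_conjTranspose]
  have h2 := h.eq
  simp only [conjTranspose_sub, conjTranspose_mul, conjTranspose_conjTranspose, Matrix.sub_mul,
    Matrix.mul_sub, Matrix.mul_assoc] at h2 ⊢
  simp only [h2, sub_self]

/-- A partial isometry is a contraction on both sides. -/
lemma posSemidef_one_sub_of_isIdempotentElem_mul_conjTranspose {n : Type*} [Fintype n]
    [DecidableEq n] {V : Matrix n n ℂ} (h : IsIdempotentElem (V * Vᴴ)) :
    (1 - Vᴴ * V).PosSemidef ∧ (1 - V * Vᴴ).PosSemidef := by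
  refine ⟨(isHermitian_conjTranspose_mul_self V).posSemidef_one_sub_of_isIdempotentElem ?_,
    (isHermitian_mul_conjTranspose_self V).posSemidef_one_sub_of_isIdempotentElem h⟩
  rw [IsIdempotentElem, ← Matrix.mul_assoc, Matrix.mul_assoc Vᴴ V Vᴴ,
    Matrix.mul_assoc Vᴴ (V * Vᴴ) V,
    mul_conjTranspose_mul_self_of_isIdempotentElem h]

namespace UnitaryGroup

variable {n : Type*} [Fintype n] [DecidableEq n]

lemma conjTranspose_mul_self (U : unitaryGroup n ℂ) : (U : Matrix n n ℂ)ᴴ * U = 1 :=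
  UnitaryGroup.star_mul_self U

lemma mul_conjTranspose_self (U : unitaryGroup n ℂ) :
    (U : Matrix n n ℂ) * (U : Matrix n n ℂ)ᴴ = 1 :=
  mem_unitaryGroup_iff.mp U.2

lemma conjTranspose_mul_self_mul (U : unitaryGroup n ℂ) (X : Matrix n n ℂ) :
    (U : Matrix n n ℂ)ᴴ * ((U : Matrix n n ℂ) * X) = X := by
  rw [← Matrix.mul_assoc, conjTranspose_mul_self, Matrix.one_mul]

lemma mul_conjTranspose_self_mul (U : unitaryGroup n ℂ) (X : Matrix n n ℂ) :
    (U : Matrix n n ℂ) * ((U : Matrix n n ℂ)ᴴ * X) = X := by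
  rw [← Matrix.mul_assoc, mul_conjTranspose_self, Matrix.one_mul]

end UnitaryGroup

end Matrix

section MatFun

variable {n : ℕ} {A : Matrix (Fin n) (Fin n) ℂ}

lemma matFun_of_isHermitian (hA : A.IsHermitian) (f : ℝ → ℝ) :
    matFun f A = (hA.eigenvectorUnitary : Matrix (Fin n) (Fin n) ℂ) *
      diagonal (fun i => (f (hA.eigenvalues i) : ℂ)) *
        (hA.eigenvectorUnitary : Matrix (Fin n) (Fin n) ℂ)ᴴ := by
  rw [matFun, dif_pos hA]

lemma matFun_eq_cfc (hA : A.IsHermitian) (f : ℝ → ℝ) : matFun f A = cfc f A := by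
  rw [matFun_of_isHermitian hA, hA.cfc_eq, IsHermitian.cfc, Unitary.conjStarAlgAut_apply]
  rfl

lemma isHermitian_matFun (f : ℝ → ℝ) (A : Matrix (Fin n) (Fin n) ℂ) :
    (matFun f A).IsHermitian := by
  by_cases hA : A.IsHermitian
  · rw [matFun_eq_cfc hA]
    exact cfc_predicate f A
  · simp [matFun, hA]

lemma trace_matFun (hA : A.IsHermitian) (f : ℝ → ℝ) :
    (matFun f A).trace = ∑ i, (f (hA.eigenvalues i) : ℂ) := by
  rw [matFun_of_isHermitian hA, trace_mul_cycle, UnitaryGroup.conjTranspose_mul_self,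
    Matrix.one_mul, trace_diagonal]

lemma matFun_congr (hA : A.IsHermitian) {f g : ℝ → ℝ}
    (h : ∀ i, f (hA.eigenvalues i) = g (hA.eigenvalues i)) : matFun f A = matFun g A := by
  simp only [matFun_of_isHermitian hA, h]

lemma matFun_id (hA : A.IsHermitian) : matFun (fun x => x) A = A := by
  rw [matFun_eq_cfc hA]
  exact cfc_id ℝ A hA.isSelfAdjoint

lemma matFun_mul_matFun (hA : A.IsHermitian) (f g : ℝ → ℝ) :
    matFun f A * matFun g A = matFun (fun x => f x * g x) A := by
  simp only [matFun_eq_cfc hA]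
  exact (cfc_mul f g A (A.finite_real_spectrum.continuousOn f)
    (A.finite_real_spectrum.continuousOn g)).symm

lemma matFun_matFun (hA : A.IsHermitian) (f g : ℝ → ℝ) :
    matFun f (matFun g A) = matFun (f ∘ g) A := by
  rw [matFun_eq_cfc (isHermitian_matFun g A), matFun_eq_cfc hA, matFun_eq_cfc hA,
    cfc_comp f g A hA.isSelfAdjoint ((A.finite_real_spectrum.image g).continuousOn f)
      (A.finite_real_spectrum.continuousOn g)]

lemma matFun_rpow_mul_matFun_rpow_of_add_eq_one (hA : A.PosSemidef) {p q : ℝ}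
    (hpq : p + q = 1) : matFun (fun x => x ^ p) A * matFun (fun x => x ^ q) A = A := by
  rw [matFun_mul_matFun hA.1, matFun_congr hA.1 (g := fun x => x), matFun_id hA.1]
  intro i
  rw [← Real.rpow_add' (hA.eigenvalues_nonneg i) (by rw [hpq]; exact one_ne_zero), hpq,
    Real.rpow_one]

lemma matFun_rpow_half_mul_matFun_rpow_half (hA : A.PosSemidef) {p : ℝ} (hp : p ≠ 0) :
    matFun (fun x => x ^ (p / 2)) A * matFun (fun x => x ^ (p / 2)) A =
      matFun (fun x => x ^ p) A := by
  rw [matFun_mul_matFun hA.1]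
  refine matFun_congr hA.1 fun i => ?_
  rw [← Real.rpow_add' (hA.eigenvalues_nonneg i) (by simpa using hp), add_halves]

lemma matFun_of_isIdempotentElem (hA : A.IsHermitian) (hAA : IsIdempotentElem A) {f : ℝ → ℝ}
    (hf0 : f 0 = 0) (hf1 : f 1 = 1) : matFun f A = A := by
  rw [matFun_congr hA (g := fun x => x), matFun_id hA]
  intro i
  rcases hAA.spectrum_subset ℝ (hA.eigenvalues_mem_spectrum_real i) with h | h
  · rw [h, hf0]
  · rw [Set.mem_singleton_iff.mp h, hf1]

lemma matAbs_eq_matFun (M : Matrix (Fin n) (Fin n) ℂ) :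
    matAbs M = matFun Real.sqrt (Mᴴ * M) := by
  rw [matFun_of_isHermitian (isHermitian_conjTranspose_mul_self M)]
  rfl

end MatFun

namespace Matrix.IsHermitian

variable {n : ℕ} {A : Matrix (Fin n) (Fin n) ℂ}

lemma conjTranspose_eigenvectorUnitary_mul_mul (hA : A.IsHermitian) :
    (hA.eigenvectorUnitary : Matrix (Fin n) (Fin n) ℂ)ᴴ * A * hA.eigenvectorUnitary =
      diagonal (fun i => (hA.eigenvalues i : ℂ)) := by
  have h := hA.conjStarAlgAut_star_eigenvectorUnitary
  simp only [Unitary.conjStarAlgAut_apply, Unitary.coe_star, star_star] at h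
  exact h

lemma exists_eigsDec_last_eq (hA : A.IsHermitian) (h : n - 1 < n) :
    ∃ i, eigsDec A ⟨n - 1, h⟩ = hA.eigenvalues i ∧ ∀ j, hA.eigenvalues i ≤ hA.eigenvalues j := by
  have hrev : (⟨n - 1, h⟩ : Fin n).rev = ⟨0, by omega⟩ := by ext; simp [Fin.rev]; omega
  refine ⟨Tuple.sort hA.eigenvalues ⟨0, by omega⟩,
    by rw [eigsDec, dif_pos hA, sortDec, hrev], fun j => ?_⟩
  simpa using Tuple.monotone_sort hA.eigenvalues
    (show (⟨0, _⟩ : Fin n) ≤ (Tuple.sort hA.eigenvalues).symm j from Nat.zero_le _)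

noncomputable def eigenvectorProj (hA : A.IsHermitian) (i : Fin n) : Matrix (Fin n) (Fin n) ℂ :=
  (hA.eigenvectorUnitary : Matrix (Fin n) (Fin n) ℂ) * single i i 1 *
    (hA.eigenvectorUnitary : Matrix (Fin n) (Fin n) ℂ)ᴴ

lemma isHermitian_eigenvectorProj (hA : A.IsHermitian) (i : Fin n) :
    (hA.eigenvectorProj i).IsHermitian := by
  simp [IsHermitian, eigenvectorProj, conjTranspose_single, Matrix.mul_assoc]

lemma isIdempotentElem_eigenvectorProj (hA : A.IsHermitian) (i : Fin n) :
    IsIdempotentElem (hA.eigenvectorProj i) := by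
  simp only [IsIdempotentElem, eigenvectorProj, Matrix.mul_assoc,
    UnitaryGroup.conjTranspose_mul_self_mul]
  rw [← Matrix.mul_assoc (single i i 1), single_mul_single_same, one_mul]

lemma isDensityMatrix_eigenvectorProj (hA : A.IsHermitian) (i : Fin n) :
    IsDensityMatrix (hA.eigenvectorProj i) := by
  refine ⟨(isHermitian_eigenvectorProj hA i).posSemidef_of_isIdempotentElem
    (isIdempotentElem_eigenvectorProj hA i), ?_⟩
  rw [eigenvectorProj, trace_mul_cycle, UnitaryGroup.conjTranspose_mul_self, Matrix.one_mul,
    trace_single_eq_same]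

lemma matFun_mul_matFun_eigenvectorProj (hA : A.IsHermitian) {f g : ℝ → ℝ} (hg0 : g 0 = 0)
    (hg1 : g 1 = 1) (i : Fin n) :
    matFun f A * matFun g (hA.eigenvectorProj i) =
      (f (hA.eigenvalues i) : ℂ) • hA.eigenvectorProj i := by
  have hdiag : diagonal (fun j => (f (hA.eigenvalues j) : ℂ)) * single i i 1 =
      (f (hA.eigenvalues i) : ℂ) • single i i 1 := by
    ext a b
    by_cases h : i = a <;> simp [diagonal_mul, single_apply, h]
  rw [matFun_of_isIdempotentElem (hA.isHermitian_eigenvectorProj i)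
    (hA.isIdempotentElem_eigenvectorProj i) hg0 hg1]
  simp only [matFun_of_isHermitian hA, eigenvectorProj, Matrix.mul_assoc,
    UnitaryGroup.conjTranspose_mul_self_mul]
  rw [← Matrix.mul_assoc (diagonal _), hdiag, Matrix.smul_mul, Matrix.mul_smul]

end Matrix.IsHermitian

section Density

variable {n : ℕ} {ρ : Matrix (Fin n) (Fin n) ℂ}

lemma IsDensityMatrix.sum_eigenvalues (hρ : IsDensityMatrix ρ) :
    ∑ i, hρ.1.1.eigenvalues i = 1 := by
  simpa using congrArg Complex.re (hρ.1.1.trace_eq_sum_eigenvalues.symm.trans hρ.2)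

lemma IsDensityMatrix.eigenvalues_le_one (hρ : IsDensityMatrix ρ) (i : Fin n) :
    hρ.1.1.eigenvalues i ≤ 1 :=
  hρ.sum_eigenvalues ▸
    Finset.single_le_sum (fun j _ => hρ.1.eigenvalues_nonneg j) (Finset.mem_univ i)

lemma IsDensityMatrix.re_trace_ofReal_smul (hρ : IsDensityMatrix ρ) (c : ℝ) :
    ((c : ℂ) • ρ).trace.re = c := by
  simp [trace_smul, hρ.2]

lemma isQuantumChannel_of_kraus {κ : Type*} [Fintype κ] (F : κ → Matrix (Fin n) (Fin n) ℂ)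
    (hF : ∑ j, (F j)ᴴ * F j = 1) : IsQuantumChannel (fun X => ∑ j, F j * X * (F j)ᴴ) := by
  let e := Fintype.equivFin κ
  refine ⟨Fintype.card κ, F ∘ e.symm, ?_, fun X => ?_⟩
  · rw [← hF]; exact e.symm.sum_comp (fun j => (F j)ᴴ * F j)
  · exact (e.symm.sum_comp (fun j => F j * X * (F j)ᴴ)).symm

lemma IsQuantumChannel.isDensityMatrix
    {Φ : Matrix (Fin n) (Fin n) ℂ → Matrix (Fin n) (Fin n) ℂ} (hΦ : IsQuantumChannel Φ)
    (hρ : IsDensityMatrix ρ) : IsDensityMatrix (Φ ρ) := by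
  obtain ⟨r, F, hF, hΦ⟩ := hΦ
  rw [hΦ]
  refine ⟨posSemidef_sum _ fun j _ => hρ.1.mul_mul_conjTranspose_same (F j), ?_⟩
  simp_rw [trace_sum, trace_mul_cycle (F _), ← trace_sum, ← Finset.sum_mul, hF, one_mul, hρ.2]

lemma isQuantumChannel_trace_smul_mul_conjTranspose (B : Matrix (Fin n) (Fin n) ℂ)
    (hB : (Bᴴ * B).trace = 1) : IsQuantumChannel (fun X => X.trace • (B * Bᴴ)) := by
  have kraus_sq : ∀ j k : Fin n,
      (B * single j k 1)ᴴ * (B * single j k 1) = (Bᴴ * B) j j • single k k 1 := by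
    intro j k
    rw [conjTranspose_mul, conjTranspose_single, star_one, Matrix.mul_assoc,
      ← Matrix.mul_assoc Bᴴ, ← Matrix.mul_assoc, single_mul_mul_single, one_mul, mul_one,
      smul_single, smul_eq_mul, mul_one]
  have kraus_conj : ∀ (j k : Fin n) (X : Matrix (Fin n) (Fin n) ℂ),
      B * single j k 1 * X * (B * single j k 1)ᴴ = X k k • (B * single j j 1 * Bᴴ) := by
    intro j k X
    rw [conjTranspose_mul, conjTranspose_single, star_one,
      show B * single j k 1 * X * (single k j 1 * Bᴴ) =
        B * (single j k 1 * X * single k j 1) * Bᴴ by simp only [Matrix.mul_assoc],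
      single_mul_mul_single, one_mul, mul_one,
      show single j j (X k k) = X k k • single j j (1 : ℂ) by
        rw [smul_single, smul_eq_mul, mul_one],
      Matrix.mul_smul, Matrix.smul_mul]
  convert isQuantumChannel_of_kraus (fun jk : Fin n × Fin n => B * single jk.1 jk.2 1) ?_
    using 2 with X
  · rw [Fintype.sum_prod_type]
    simp only [kraus_conj, ← Finset.sum_smul, ← Finset.smul_sum, ← Finset.mul_sum,
      ← Finset.sum_mul, sum_single_one, mul_one]
    rfl
  · rw [Fintype.sum_prod_type]
    simp only [kraus_sq, ← Finset.smul_sum, sum_single_one, ← Finset.sum_smul]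
    change (Bᴴ * B).trace • (1 : Matrix (Fin n) (Fin n) ℂ) = 1
    rw [hB, one_smul]

lemma isQuantumChannel_trace_smul {τ : Matrix (Fin n) (Fin n) ℂ} (hτ : IsDensityMatrix τ) :
    IsQuantumChannel (fun X => X.trace • τ) := by
  set B := matFun Real.sqrt τ
  have hBh : Bᴴ = B := (isHermitian_matFun _ _).eq
  have hB : B * B = τ := by
    rw [matFun_mul_matFun hτ.1.1, matFun_congr hτ.1.1 (g := fun x => x), matFun_id hτ.1.1]
    exact fun i => Real.mul_self_sqrt (hτ.1.eigenvalues_nonneg i)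
  simpa only [hBh, hB] using
    isQuantumChannel_trace_smul_mul_conjTranspose B (by rw [hBh, hB, hτ.2])

end Density

section TraceNorm

variable {n : ℕ} {A : Matrix (Fin n) (Fin n) ℂ}

lemma traceAbs_eq_sum_sqrt (M : Matrix (Fin n) (Fin n) ℂ) :
    traceAbs M = ∑ k, √((isHermitian_conjTranspose_mul_self M).eigenvalues k) := by
  rw [traceAbs, matAbs_eq_matFun, trace_matFun (isHermitian_conjTranspose_mul_self M),
    Complex.re_sum]
  simp only [Complex.ofReal_re]

lemma traceAbs_of_posSemidef (hA : A.PosSemidef) : traceAbs A = A.trace.re := by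
  have hAA : Aᴴ * A = matFun (fun x => x * x) A := by
    rw [hA.1.eq, ← matFun_mul_matFun hA.1, matFun_id hA.1]
  rw [traceAbs, matAbs_eq_matFun, hAA, matFun_matFun hA.1,
    matFun_congr hA.1 (g := fun x => x), matFun_id hA.1]
  exact fun i => Real.sqrt_mul_self (hA.eigenvalues_nonneg i)

lemma IsDensityMatrix.traceAbs_ofReal_smul (hA : IsDensityMatrix A) {c : ℝ} (hc : 0 ≤ c) :
    traceAbs ((c : ℂ) • A) = c := by
  rw [traceAbs_of_posSemidef (hA.1.smul (by exact_mod_cast hc)), hA.re_trace_ofReal_smul]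

lemma re_trace_le_traceAbs (M : Matrix (Fin n) (Fin n) ℂ) : M.trace.re ≤ traceAbs M := by
  -- with `W` diagonalizing `Mᴴ M`, each diagonal entry of `N = Wᴴ M W` is bounded by the norm
  -- `√μₖ = ‖M wₖ‖` of its column
  have hH := isHermitian_conjTranspose_mul_self M
  set N := (hH.eigenvectorUnitary : Matrix (Fin n) (Fin n) ℂ)ᴴ * M * hH.eigenvectorUnitary
  have hN : Nᴴ * N = diagonal (fun k => (hH.eigenvalues k : ℂ)) := by
    rw [← hH.conjTranspose_eigenvectorUnitary_mul_mul]
    simp only [N, conjTranspose_mul, conjTranspose_conjTranspose, Matrix.mul_assoc,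
      UnitaryGroup.mul_conjTranspose_self_mul]
  have hdiag : ∀ k, (N k k).re ≤ √(hH.eigenvalues k) := fun k => by
    refine (Complex.re_le_norm _).trans (Real.le_sqrt_of_sq_le ?_)
    have hcol := re_conjTranspose_mul_apply_self N k
    rw [hN, diagonal_apply_eq, Complex.ofReal_re] at hcol
    rw [hcol]
    exact Finset.single_le_sum (f := fun i => ‖N i k‖ ^ 2) (fun i _ => sq_nonneg _)
      (Finset.mem_univ k)
  have htr : M.trace = N.trace := by
    rw [trace_mul_cycle, UnitaryGroup.mul_conjTranspose_self, Matrix.one_mul]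
  rw [traceAbs_eq_sum_sqrt, htr, trace, Complex.re_sum]
  exact Finset.sum_le_sum fun k _ => hdiag k

/-- Polar decomposition: `V = |M|⁺ Mᴴ`, with `|M|⁺ = f(Mᴴ M)` for `f x = (√x)⁻¹` the
pseudo-inverse of `|M|` (Lean's `0⁻¹ = 0` takes care of the kernel). -/
lemma exists_contraction_mul_eq_matAbs (M : Matrix (Fin n) (Fin n) ℂ) :
    ∃ V : Matrix (Fin n) (Fin n) ℂ,
      (1 - Vᴴ * V).PosSemidef ∧ (1 - V * Vᴴ).PosSemidef ∧ V * M = matAbs M := by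
  have hH := isHermitian_conjTranspose_mul_self M
  set P := matFun (fun x => (√x)⁻¹) (Mᴴ * M)
  have hP : Pᴴ = P := (isHermitian_matFun _ _).eq
  have hsqrt : ∀ x : ℝ, (√x)⁻¹ * x = √x := fun x => by rw [inv_mul_eq_div, Real.div_sqrt]
  have hPH : P * (Mᴴ * M) = matAbs M := by
    conv_lhs => rw [← matFun_id hH]
    rw [matFun_mul_matFun hH]
    simp only [hsqrt, matAbs_eq_matFun]
  have hVV : P * Mᴴ * (P * Mᴴ)ᴴ = matFun (fun x => √x * (√x)⁻¹) (Mᴴ * M) := by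
    calc P * Mᴴ * (P * Mᴴ)ᴴ = P * (Mᴴ * M) * P := by
          rw [conjTranspose_mul, hP, conjTranspose_conjTranspose]
          simp only [Matrix.mul_assoc]
      _ = _ := by rw [hPH, matAbs_eq_matFun, matFun_mul_matFun hH]
  obtain ⟨hV, hV'⟩ := posSemidef_one_sub_of_isIdempotentElem_mul_conjTranspose (V := P * Mᴴ) (by
    rw [hVV, IsIdempotentElem, matFun_mul_matFun hH]
    congr 1; funext x
    rcases eq_or_ne (√x) 0 with h | h <;> field_simp [h])
  exact ⟨P * Mᴴ, hV, hV', by rw [Matrix.mul_assoc, hPH]⟩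

end TraceNorm

section Bounds

variable {n : ℕ} {p q : ℝ} {ρ σ : Matrix (Fin n) (Fin n) ℂ}

theorem re_trace_conj_matFun_rpow_mul_matFun_rpow_le_one (hp : 0 ≤ p) (hq : 0 ≤ q)
    (hpq : p + q = 1) (hρ : IsDensityMatrix ρ) (hσ : IsDensityMatrix σ)
    {V : Matrix (Fin n) (Fin n) ℂ} (hV : (1 - Vᴴ * V).PosSemidef)
    (hV' : (1 - V * Vᴴ).PosSemidef) :
    (V * matFun (fun x => x ^ p) ρ * Vᴴ * matFun (fun x => x ^ q) σ).trace.re ≤ 1 := by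
  set U := (hρ.1.1.eigenvectorUnitary : Matrix (Fin n) (Fin n) ℂ)
  set W := (hσ.1.1.eigenvectorUnitary : Matrix (Fin n) (Fin n) ℂ)
  have hU : ∀ X, U * (Uᴴ * X) = X := UnitaryGroup.mul_conjTranspose_self_mul _
  have hW : ∀ X, W * (Wᴴ * X) = X := UnitaryGroup.mul_conjTranspose_self_mul _
  have hU' : Uᴴ * U = 1 := UnitaryGroup.conjTranspose_mul_self _
  have hW' : Wᴴ * W = 1 := UnitaryGroup.conjTranspose_mul_self _
  set G := (V * U)ᴴ * W
  have hrow : (1 - G * Gᴴ).PosSemidef := by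
    convert hV.conjTranspose_mul_mul_same U using 1
    simp only [G, conjTranspose_mul, conjTranspose_conjTranspose, Matrix.mul_assoc,
      Matrix.mul_sub, Matrix.sub_mul, Matrix.mul_one, hW, hU']
  have hcol : (1 - Gᴴ * G).PosSemidef := by
    convert hV'.conjTranspose_mul_mul_same W using 1
    simp only [G, conjTranspose_mul, conjTranspose_conjTranspose, Matrix.mul_assoc,
      Matrix.mul_sub, Matrix.sub_mul, Matrix.mul_one, hU, hW']
  have hform : V * matFun (fun x => x ^ p) ρ * Vᴴ * matFun (fun x => x ^ q) σ =
      (V * U) * diagonal (fun i => ((hρ.1.1.eigenvalues i ^ p : ℝ) : ℂ)) * (V * U)ᴴ *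
        (W * diagonal (fun j => ((hσ.1.1.eigenvalues j ^ q : ℝ) : ℂ)) * Wᴴ) := by
    simp only [matFun_of_isHermitian hρ.1.1, matFun_of_isHermitian hσ.1.1, conjTranspose_mul,
      Matrix.mul_assoc]
    rfl
  rw [hform, trace_conj_diagonal_mul_conj_diagonal, Complex.ofReal_re]
  refine (sum_sum_rpow_mul_rpow_mul_le hp hq hpq hρ.1.eigenvalues_nonneg
    hσ.1.eigenvalues_nonneg (fun _ _ => sq_nonneg _) (sum_row_norm_sq_le_one hrow)
    (sum_col_norm_sq_le_one hcol)).trans_eq ?_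
  rw [hρ.sum_eigenvalues, hσ.sum_eigenvalues, mul_one, mul_one, hpq]

theorem re_trace_matFun_rpow_mul_matFun_rpow_le_one (hp : 0 ≤ p) (hq : 0 ≤ q) (hpq : p + q = 1)
    (hρ : IsDensityMatrix ρ) (hσ : IsDensityMatrix σ) :
    (matFun (fun x => x ^ p) ρ * matFun (fun x => x ^ q) σ).trace.re ≤ 1 := by
  simpa using re_trace_conj_matFun_rpow_mul_matFun_rpow_le_one hp hq hpq hρ hσ (V := 1)
    (by simpa using PosSemidef.zero) (by simpa using PosSemidef.zero)

theorem rpow_le_re_trace_matFun_rpow_mul_matFun_rpow (hp : 0 ≤ p) (hq : q ≤ 1)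
    (hρ : ρ.IsHermitian) (hσ : IsDensityMatrix σ) {m : ℝ} (hm : 0 ≤ m)
    (hma : ∀ i, m ≤ hρ.eigenvalues i) :
    m ^ p ≤ (matFun (fun x => x ^ p) ρ * matFun (fun x => x ^ q) σ).trace.re := by
  set U := (hρ.eigenvectorUnitary : Matrix (Fin n) (Fin n) ℂ)
  set W := (hσ.1.1.eigenvectorUnitary : Matrix (Fin n) (Fin n) ℂ)
  have hform : matFun (fun x => x ^ p) ρ * matFun (fun x => x ^ q) σ =
      U * diagonal (fun i => ((hρ.eigenvalues i ^ p : ℝ) : ℂ)) * Uᴴ *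
        (W * diagonal (fun j => ((hσ.1.1.eigenvalues j ^ q : ℝ) : ℂ)) * Wᴴ) := by
    simp only [matFun_of_isHermitian hρ, matFun_of_isHermitian hσ.1.1]
    rfl
  have hcol : ∀ j, 1 ≤ ∑ i, ‖(Uᴴ * W) i j‖ ^ 2 := fun j => by
    have hG : (Uᴴ * W)ᴴ * (Uᴴ * W) = 1 := by
      simp only [conjTranspose_mul, conjTranspose_conjTranspose, Matrix.mul_assoc,
        UnitaryGroup.mul_conjTranspose_self_mul, U, W, UnitaryGroup.conjTranspose_mul_self]
    rw [← re_conjTranspose_mul_apply_self, hG, one_apply_eq, Complex.one_re]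
  rw [hform, trace_conj_diagonal_mul_conj_diagonal, Complex.ofReal_re]
  simpa [hσ.sum_eigenvalues] using mul_sum_le_sum_sum_rpow_mul_rpow_mul hp hq hm hma
    hσ.1.eigenvalues_nonneg hσ.eigenvalues_le_one (fun _ _ => sq_nonneg _) hcol

theorem traceAbs_matFun_rpow_mul_matFun_rpow_le_one (hp : 0 < p) (hq : 0 < q)
    (hpq : p + q = 1) (hρ : IsDensityMatrix ρ) (hσ : IsDensityMatrix σ) :
    traceAbs (matFun (fun x => x ^ p) ρ * matFun (fun x => x ^ q) σ) ≤ 1 := by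
  set X := matFun (fun x => x ^ p) ρ
  set Y := matFun (fun x => x ^ q) σ
  obtain ⟨V, hV, hV', hVM⟩ := exists_contraction_mul_eq_matAbs (X * Y)
  set A := matFun (fun x => x ^ (p / 2)) ρ
  set B := matFun (fun x => x ^ (q / 2)) σ
  have hA : Aᴴ = A := (isHermitian_matFun _ _).eq
  have hB : Bᴴ = B := (isHermitian_matFun _ _).eq
  have hAA : A * A = X := matFun_rpow_half_mul_matFun_rpow_half hρ.1 hp.ne'
  have hBB : B * B = Y := matFun_rpow_half_mul_matFun_rpow_half hσ.1 hq.ne'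
  have hinner : (V * (X * Y)).trace = ((A * Vᴴ * B)ᴴ * (A * B)).trace := by
    simp only [conjTranspose_mul, hA, hB, conjTranspose_conjTranspose, ← hAA, ← hBB,
      Matrix.mul_assoc]
    rw [trace_mul_comm B]
    simp only [Matrix.mul_assoc]
  have hleft : ((A * Vᴴ * B)ᴴ * (A * Vᴴ * B)).trace = (V * X * Vᴴ * Y).trace := by
    simp only [conjTranspose_mul, hA, hB, conjTranspose_conjTranspose, ← hAA, ← hBB,
      Matrix.mul_assoc]
    rw [trace_mul_comm B]
    simp only [Matrix.mul_assoc]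
  have hright : ((A * B)ᴴ * (A * B)).trace = (X * Y).trace := by
    simp only [conjTranspose_mul, hA, hB, ← hAA, ← hBB, Matrix.mul_assoc]
    rw [trace_mul_comm B]
    simp only [Matrix.mul_assoc]
  have hright_nonneg : 0 ≤ ((A * B)ᴴ * (A * B)).trace.re := by
    rw [re_trace_conjTranspose_mul_self]; positivity
  calc traceAbs (X * Y) = (V * (X * Y)).trace.re := by rw [traceAbs, hVM]
    _ ≤ ‖(V * (X * Y)).trace‖ := Complex.re_le_norm _
    _ ≤ 1 := by
      rw [← sq_le_one_iff₀ (norm_nonneg _), hinner]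
      refine (norm_trace_conjTranspose_mul_sq_le _ _).trans (mul_le_one₀ ?_ hright_nonneg ?_)
      · rw [hleft]
        exact re_trace_conj_matFun_rpow_mul_matFun_rpow_le_one hp.le hq.le hpq hρ hσ hV hV'
      · rw [hright]
        exact re_trace_matFun_rpow_mul_matFun_rpow_le_one hp.le hq.le hpq hρ hσ

end Bounds

/-- For `p, q > 0` with `p + q = 1`, the maximum of `tr(ρ1^p Φ(ρ2)^q)` over
all quantum channels is `1` and the minimum is `a_n^p` (`a_n` the smallest eigenvalue of `ρ1`);
the same holds for `tr|ρ1^p Φ(ρ2)^q|`. -/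
theorem stmt_17 {n : ℕ} (hn : 0 < n) (p q : ℝ) (hp : 0 < p) (hq : 0 < q) (hpq : p + q = 1)
    (ρ1 ρ2 : Matrix (Fin n) (Fin n) ℂ)
    (h1 : IsDensityMatrix ρ1) (h2 : IsDensityMatrix ρ2) :
    (∀ Φ, IsQuantumChannel Φ →
        trR (matFun (fun x => x ^ p) ρ1 * matFun (fun x => x ^ q) (Φ ρ2)) ≤ 1) ∧
      (∃ Φ, IsQuantumChannel Φ ∧
        trR (matFun (fun x => x ^ p) ρ1 * matFun (fun x => x ^ q) (Φ ρ2)) = 1) ∧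
      (∀ Φ, IsQuantumChannel Φ →
        (eigsDec ρ1 ⟨n - 1, by omega⟩) ^ p ≤
          trR (matFun (fun x => x ^ p) ρ1 * matFun (fun x => x ^ q) (Φ ρ2))) ∧
      (∃ Φ, IsQuantumChannel Φ ∧
        trR (matFun (fun x => x ^ p) ρ1 * matFun (fun x => x ^ q) (Φ ρ2)) =
          (eigsDec ρ1 ⟨n - 1, by omega⟩) ^ p) ∧
      (∀ Φ, IsQuantumChannel Φ →
        traceAbs (matFun (fun x => x ^ p) ρ1 * matFun (fun x => x ^ q) (Φ ρ2)) ≤ 1) ∧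
      (∃ Φ, IsQuantumChannel Φ ∧
        traceAbs (matFun (fun x => x ^ p) ρ1 * matFun (fun x => x ^ q) (Φ ρ2)) = 1) ∧
      (∀ Φ, IsQuantumChannel Φ →
        (eigsDec ρ1 ⟨n - 1, by omega⟩) ^ p ≤
          traceAbs (matFun (fun x => x ^ p) ρ1 * matFun (fun x => x ^ q) (Φ ρ2))) ∧
      ∃ Φ, IsQuantumChannel Φ ∧
        traceAbs (matFun (fun x => x ^ p) ρ1 * matFun (fun x => x ^ q) (Φ ρ2)) =
          (eigsDec ρ1 ⟨n - 1, by omega⟩) ^ p := by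
  obtain ⟨i₀, hi₀, hmin⟩ := h1.1.1.exists_eigsDec_last_eq (by omega)
  simp only [hi₀]
  set P := h1.1.1.eigenvectorProj i₀
  have hP : IsDensityMatrix P := h1.1.1.isDensityMatrix_eigenvectorProj i₀
  have hmax : matFun (fun x => x ^ p) ρ1 * matFun (fun x => x ^ q) ρ1 = ρ1 :=
    matFun_rpow_mul_matFun_rpow_of_add_eq_one h1.1 hpq
  have hmin_at : matFun (fun x => x ^ p) ρ1 * matFun (fun x => x ^ q) P =
      ((h1.1.1.eigenvalues i₀ ^ p : ℝ) : ℂ) • P :=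
    h1.1.1.matFun_mul_matFun_eigenvectorProj (g := fun x => x ^ q) (Real.zero_rpow hq.ne')
      (Real.one_rpow q) i₀
  have hlow : ∀ Φ, IsQuantumChannel Φ → h1.1.1.eigenvalues i₀ ^ p ≤
      (matFun (fun x => x ^ p) ρ1 * matFun (fun x => x ^ q) (Φ ρ2)).trace.re := fun Φ hΦ =>
    rpow_le_re_trace_matFun_rpow_mul_matFun_rpow hp.le (by linarith) h1.1.1
      (hΦ.isDensityMatrix h2) (h1.1.eigenvalues_nonneg i₀) hmin
  refine ⟨fun Φ hΦ => re_trace_matFun_rpow_mul_matFun_rpow_le_one hp.le hq.le hpq h1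
      (hΦ.isDensityMatrix h2), ⟨_, isQuantumChannel_trace_smul h1, ?_⟩, hlow,
    ⟨_, isQuantumChannel_trace_smul hP, ?_⟩,
    fun Φ hΦ => traceAbs_matFun_rpow_mul_matFun_rpow_le_one hp hq hpq h1 (hΦ.isDensityMatrix h2),
    ⟨_, isQuantumChannel_trace_smul h1, ?_⟩,
    fun Φ hΦ => (hlow Φ hΦ).trans (re_trace_le_traceAbs _),
    ⟨_, isQuantumChannel_trace_smul hP, ?_⟩⟩ <;> simp only [h2.2, one_smul]
  · rw [trR, hmax, h1.2, Complex.one_re]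
  · rw [trR, hmin_at, hP.re_trace_ofReal_smul]
  · rw [hmax, traceAbs_of_posSemidef h1.1, h1.2, Complex.one_re]
  · rw [hmin_at, hP.traceAbs_ofReal_smul (Real.rpow_nonneg (h1.1.eigenvalues_nonneg i₀) p)]
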